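/- arXiv:1902.08319 — 4 statements merged into one kernel-verified Lean document; each statement's English description precedes it below -/
import Mathlib

section
/- Let n ≥ 1 and x₀, v₀, x₁, v₁ ∈ ℝⁿ. For every C² curve γ : [0,1] → ℝⁿ satisfying the Hermite boundary conditions γ(0) = x₀, γ'(0) = v₀, γ(1) = x₁, γ'(1) = v₁, one has ∫₀¹ ‖γ''(t)‖² dt ≥ E(x₀, v₀, x₁, v₁), where E(x₀, v₀, x₁, v₁) := 12‖x₁ − x₀ − v₀‖² − 12⟨x₁ − x₀ − v₀, v₁ − v₀⟩ + 4‖v₁ − v₀‖². -/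
/-!
The functions `1` and `1/2 - t` are orthogonal in `L²(0,1)`, with squared norms `1` and `1/12`.
Integrating by parts, the corresponding moments of `γ''` are `v₁ - v₀` and
`x₁ - x₀ - (v₀ + v₁)/2`, so Bessel's inequality gives
`∫₀¹ ‖γ''‖² ≥ ‖v₁ - v₀‖² + 12 ‖x₁ - x₀ - (v₀ + v₁)/2‖²`, and the right-hand side expands to the
transition cost. Equality holds for the cubic Hermite interpolant, whose acceleration is affine.
-/

open Set
open scoped InnerProductSpace

section NormedSpace

variable {F : Type*} [NormedAddCommGroup F] [NormedSpace ℝ F] [CompleteSpace F]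

theorem intervalIntegral.integral_const_sub_smul_derivWithin {v : ℝ → F} {a b : ℝ} (hab : a < b)
    (hv : ContDiffOn ℝ 1 v (Icc a b)) (c : ℝ) :
    ∫ t in a..b, (c - t) • derivWithin v (Icc a b) t
      = (c - b) • v b - (c - a) • v a + ∫ t in a..b, v t := by
  have hvd : DifferentiableOn ℝ v (Icc a b) := hv.differentiableOn one_ne_zero
  have hv' : ContinuousOn (derivWithin v (Icc a b)) (Icc a b) :=
    hv.continuousOn_derivWithin (uniqueDiffOn_Icc hab) le_rfl
  rw [← uIcc_of_le hab.le] at hvd hv' ⊢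
  rw [intervalIntegral.integral_smul_deriv_eq_deriv_smul_of_hasDerivWithinAt (u := fun t => c - t)
    (u' := fun _ => -1) (fun t _ => ((hasDerivAt_id t).const_sub c).hasDerivWithinAt)
    (fun t ht => (hvd t ht).hasDerivWithinAt) intervalIntegrable_const hv'.intervalIntegrable]
  simp [sub_eq_add_neg]

end NormedSpace

section InnerProductSpace

variable {E : Type*} [NormedAddCommGroup E] [InnerProductSpace ℝ E]

theorem norm_sq_add_twelve_mul_norm_sub_half_smul_sq (x v : E) :
    ‖v‖ ^ 2 + 12 * ‖x - (2⁻¹ : ℝ) • v‖ ^ 2 = 12 * ‖x‖ ^ 2 - 12 * ⟪x, v⟫_ℝ + 4 * ‖v‖ ^ 2 := by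
  rw [norm_sub_sq_real, norm_smul, real_inner_smul_right]
  norm_num
  ring

theorem intervalIntegral.two_mul_integral_inner_sub_le {f p : ℝ → E} {a b : ℝ} (hab : a ≤ b)
    (hf : ContinuousOn f (Icc a b)) (hp : ContinuousOn p (Icc a b)) :
    2 * (∫ t in a..b, ⟪p t, f t⟫_ℝ) - ∫ t in a..b, ‖p t‖ ^ 2 ≤ ∫ t in a..b, ‖f t‖ ^ 2 := by
  have hpf := ((hp.inner hf).intervalIntegrable_of_Icc (μ := MeasureTheory.volume) hab).const_mul
    (2 : ℝ)
  have hp2 : IntervalIntegrable (fun t => ‖p t‖ ^ 2) MeasureTheory.volume a b :=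
    (hp.norm.pow 2).intervalIntegrable_of_Icc hab
  rw [← intervalIntegral.integral_const_mul, ← intervalIntegral.integral_sub hpf hp2]
  refine intervalIntegral.integral_mono_on hab (hpf.sub hp2)
    ((hf.norm.pow 2).intervalIntegrable_of_Icc hab) fun t _ => ?_
  nlinarith [norm_sub_sq_real (f t) (p t), sq_nonneg ‖f t - p t‖, real_inner_comm (p t) (f t)]

variable [CompleteSpace E]

theorem intervalIntegral.integral_inner {f : ℝ → E} {a b : ℝ}
    (hf : IntervalIntegrable f MeasureTheory.volume a b) (c : E) :
    ∫ t in a..b, ⟪c, f t⟫_ℝ = ⟪c, ∫ t in a..b, f t⟫_ℝ :=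
  (innerSL ℝ c).intervalIntegral_comp_comm hf

theorem norm_integral_sq_add_twelve_mul_norm_integral_smul_sq_le {f : ℝ → E}
    (hf : ContinuousOn f (Icc 0 1)) :
    ‖∫ t in (0:ℝ)..1, f t‖ ^ 2 + 12 * ‖∫ t in (0:ℝ)..1, (2⁻¹ - t) • f t‖ ^ 2
      ≤ ∫ t in (0:ℝ)..1, ‖f t‖ ^ 2 := by
  set m₀ := ∫ t in (0:ℝ)..1, f t
  set m₁ := ∫ t in (0:ℝ)..1, (2⁻¹ - t) • f t
  have hw : Continuous fun t : ℝ => 2⁻¹ - t := by fun_prop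
  have hf_int := hf.intervalIntegrable_of_Icc (μ := MeasureTheory.volume) zero_le_one
  have hwf_int : IntervalIntegrable (fun t => (2⁻¹ - t) • f t) MeasureTheory.volume 0 1 :=
    (hw.continuousOn.smul hf).intervalIntegrable_of_Icc zero_le_one
  -- the orthogonal projection of `f` onto the span of `1` and `1/2 - t`
  set p : ℝ → E := fun t => m₀ + (12 * (2⁻¹ - t)) • m₁
  have hp : Continuous p := by fun_prop
  have h_inner : ∫ t in (0:ℝ)..1, ⟪p t, f t⟫_ℝ = ‖m₀‖ ^ 2 + 12 * ‖m₁‖ ^ 2 := by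
    have hpf : ∀ t, ⟪p t, f t⟫_ℝ = ⟪m₀, f t⟫_ℝ + 12 * ⟪m₁, (2⁻¹ - t) • f t⟫_ℝ := fun t => by
      simp only [p, inner_add_left, real_inner_smul_left, real_inner_smul_right]; ring
    simp_rw [hpf]
    rw [intervalIntegral.integral_add, intervalIntegral.integral_const_mul,
      intervalIntegral.integral_inner hf_int, intervalIntegral.integral_inner hwf_int,
      real_inner_self_eq_norm_sq, real_inner_self_eq_norm_sq]
    · exact (continuousOn_const.inner hf).intervalIntegrable_of_Icc zero_le_one
    · exact ((continuousOn_const.inner (hw.continuousOn.smul hf)).intervalIntegrable_of_Icc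
        zero_le_one).const_mul 12
  have h_norm : ∫ t in (0:ℝ)..1, ‖p t‖ ^ 2 = ‖m₀‖ ^ 2 + 12 * ‖m₁‖ ^ 2 := by
    have hp_sq : ∀ t, ‖p t‖ ^ 2 = ‖m₀‖ ^ 2 + (2⁻¹ - t) * (24 * ⟪m₀, m₁⟫_ℝ)
        + (2⁻¹ - t) ^ 2 * (144 * ‖m₁‖ ^ 2) := fun t => by
      simp only [p, norm_add_sq_real, norm_smul, real_inner_smul_right, mul_pow,
        Real.norm_eq_abs, sq_abs]
      ring
    have h₁ : ∫ t in (0:ℝ)..1, (2⁻¹ - t) = 0 := by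
      rw [intervalIntegral.integral_comp_sub_left (fun x : ℝ => x)]
      norm_num [integral_id]
    have h₂ : ∫ t in (0:ℝ)..1, (2⁻¹ - t) ^ 2 = 12⁻¹ := by
      rw [intervalIntegral.integral_comp_sub_left (fun x : ℝ => x ^ 2)]
      norm_num [integral_pow]
    simp_rw [hp_sq]
    rw [intervalIntegral.integral_add, intervalIntegral.integral_add,
      intervalIntegral.integral_mul_const, intervalIntegral.integral_mul_const, h₁, h₂]
    · norm_num
      ring
    all_goals exact Continuous.intervalIntegrable (by fun_prop) _ _
  have h_proj := intervalIntegral.two_mul_integral_inner_sub_le zero_le_one hf hp.continuousOn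
  rw [h_inner, h_norm] at h_proj
  linarith

end InnerProductSpace

theorem acceleration_energy_lower_bound_general (n : ℕ)
    (x₀ v₀ x₁ v₁ : EuclideanSpace ℝ (Fin n))
    (γ : ℝ → EuclideanSpace ℝ (Fin n))
    (hγ : ContDiffOn ℝ 2 γ (Icc (0:ℝ) 1))
    (h0 : γ 0 = x₀) (h0' : derivWithin γ (Icc (0:ℝ) 1) 0 = v₀)
    (h1 : γ 1 = x₁) (h1' : derivWithin γ (Icc (0:ℝ) 1) 1 = v₁) :
    12 * ‖x₁ - x₀ - v₀‖^2 - 12 * ⟪x₁ - x₀ - v₀, v₁ - v₀⟫_ℝ + 4 * ‖v₁ - v₀‖^2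
      ≤ ∫ t in (0:ℝ)..1,
          ‖derivWithin (derivWithin γ (Icc (0:ℝ) 1)) (Icc (0:ℝ) 1) t‖^2 := by
  have hγ' : ContDiffOn ℝ 1 (derivWithin γ (Icc 0 1)) (Icc 0 1) :=
    hγ.derivWithin (uniqueDiffOn_Icc one_pos) (by norm_num)
  have hγ'' : ContinuousOn (derivWithin (derivWithin γ (Icc 0 1)) (Icc 0 1)) (Icc 0 1) :=
    hγ'.continuousOn_derivWithin (uniqueDiffOn_Icc one_pos) le_rfl
  have h_vel : ∫ t in (0:ℝ)..1, derivWithin (derivWithin γ (Icc 0 1)) (Icc 0 1) t = v₁ - v₀ := by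
    rw [intervalIntegral.integral_derivWithin_Icc_of_contDiffOn_Icc hγ' zero_le_one, h1', h0']
  have h_pos : ∫ t in (0:ℝ)..1, (2⁻¹ - t) • derivWithin (derivWithin γ (Icc 0 1)) (Icc 0 1) t
      = x₁ - x₀ - v₀ - (2⁻¹ : ℝ) • (v₁ - v₀) := by
    rw [intervalIntegral.integral_const_sub_smul_derivWithin one_pos hγ',
      intervalIntegral.integral_derivWithin_Icc_of_contDiffOn_Icc (hγ.of_le one_le_two)
        zero_le_one, h0, h1, h0', h1']
    module
  have h_bessel := norm_integral_sq_add_twelve_mul_norm_integral_smul_sq_le hγ''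
  rwa [h_vel, h_pos, norm_sq_add_twelve_mul_norm_sub_half_smul_sq] at h_bessel

/-- Lower bound for the acceleration energy: every `C²` curve `γ : [0,1] → ℝⁿ` satisfying the
Hermite boundary conditions `γ(0) = x₀`, `γ'(0) = v₀`, `γ(1) = x₁`, `γ'(1) = v₁` has
`∫₀¹ ‖γ''‖² ≥ 12‖x₁ − x₀ − v₀‖² − 12⟨x₁ − x₀ − v₀, v₁ − v₀⟩ + 4‖v₁ − v₀‖²`. -/
theorem acceleration_energy_lower_bound (n : ℕ) (hn : 1 ≤ n)
    (x₀ v₀ x₁ v₁ : EuclideanSpace ℝ (Fin n))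
    (γ : ℝ → EuclideanSpace ℝ (Fin n))
    (hγ : ContDiffOn ℝ 2 γ (Icc (0:ℝ) 1))
    (h0 : γ 0 = x₀) (h0' : derivWithin γ (Icc (0:ℝ) 1) 0 = v₀)
    (h1 : γ 1 = x₁) (h1' : derivWithin γ (Icc (0:ℝ) 1) 1 = v₁) :
    12 * ‖x₁ - x₀ - v₀‖^2 - 12 * ⟪x₁ - x₀ - v₀, v₁ - v₀⟫_ℝ + 4 * ‖v₁ - v₀‖^2
      ≤ ∫ t in (0:ℝ)..1,
          ‖derivWithin (derivWithin γ (Icc (0:ℝ) 1)) (Icc (0:ℝ) 1) t‖^2 :=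
  acceleration_energy_lower_bound_general n x₀ v₀ x₁ v₁ γ hγ h0 h0' h1 h1'
end

section
/- Let n ≥ 1 and x₀, v₀, x₁, v₁ ∈ ℝⁿ. If a C² curve γ : [0,1] → ℝⁿ satisfies the Hermite boundary conditions γ(0) = x₀, γ'(0) = v₀, γ(1) = x₁, γ'(1) = v₁ and attains the minimal acceleration energy, i.e., ∫₀¹ ‖γ''(t)‖² dt = 12‖x₁ − x₀ − v₀‖² − 12⟨x₁ − x₀ − v₀, v₁ − v₀⟩ + 4‖v₁ − v₀‖², then γ equals the cubic polynomial p(t) = x₀ + t v₀ + t²(3(x₁ − x₀) − 2v₀ − v₁) + t³(v₀ + v₁ − 2(x₁ − x₀)) for all t ∈ [0,1]; in particular the minimizer of the acceleration energy subject to the Hermite boundary conditions is unique. -/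
/-!
Let `q s = c + s • d` be the second derivative of the cubic in the conclusion. Integrating by parts
twice, `∫₀¹ ⟪γ'', q⟫` depends only on the Hermite data, and evaluating it on that data gives the
minimal energy `E`, which is also `∫₀¹ ‖q‖²`. Hence `∫₀¹ ‖γ'' - q‖² = ∫₀¹ ‖γ''‖² - E = 0`, so
`γ'' = q` on `[0,1]` by continuity, and integrating twice from the initial data gives the cubic.
-/

open Set MeasureTheory
open scoped InnerProductSpace

section

variable {E : Type*} [NormedAddCommGroup E] {a b : ℝ}

theorem eq_zero_of_integral_norm_sq_eq_zero {f : ℝ → E} (hab : a < b)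
    (hf : ContinuousOn f (Icc a b)) (h : ∫ s in a..b, ‖f s‖ ^ 2 = 0) :
    ∀ s ∈ Icc a b, f s = 0 := by
  intro s hs
  by_contra hne
  have hf2 : ContinuousOn (fun s => ‖f s‖ ^ 2) (Icc a b) := hf.norm.pow 2
  have := intervalIntegral.integral_pos hab hf2 (fun _ _ => by positivity)
    ⟨s, hs, pow_pos (norm_pos_iff.2 hne) 2⟩
  exact this.ne' h

section NormedSpace

variable [NormedSpace ℝ E]

theorem eq_of_derivWithin_eq_of_hasDerivAt {f F F' : ℝ → E}
    (hf : DifferentiableOn ℝ f (Icc a b)) (hF : ∀ s, HasDerivAt F (F' s) s)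
    (hderiv : ∀ s ∈ Ico a b, derivWithin f (Icc a b) s = F' s) (ha : f a = F a) :
    ∀ s ∈ Icc a b, f s = F s :=
  eq_of_has_deriv_right_eq
    (fun s hs => hderiv s hs ▸ (hf s (Ico_subset_Icc_self hs)).hasDerivWithinAt
      |>.mono_of_mem_nhdsWithin (Icc_mem_nhdsGE_of_mem hs))
    (fun s _ => (hF s).hasDerivWithinAt) hf.continuousOn
    (fun s _ => (hF s).continuousAt.continuousWithinAt) ha

theorem eq_cubic_of_derivWithin_derivWithin_eq_affine {γ : ℝ → E} (hab : a < b)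
    (hγ : ContDiffOn ℝ 2 γ (Icc a b)) {c d : E}
    (h : ∀ s ∈ Icc a b, derivWithin (derivWithin γ (Icc a b)) (Icc a b) s = c + (s - a) • d) :
    ∀ t ∈ Icc a b, γ t = γ a + (t - a) • derivWithin γ (Icc a b) a + ((t - a) ^ 2 / 2) • c
      + ((t - a) ^ 3 / 6) • d := by
  have hγ' : ContDiffOn ℝ 1 (derivWithin γ (Icc a b)) (Icc a b) :=
    hγ.derivWithin (uniqueDiffOn_Icc hab) (by norm_num)
  have hsub (s : ℝ) : HasDerivAt (fun t : ℝ => t - a) 1 s := (hasDerivAt_id s).sub_const a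
  have h' := eq_of_derivWithin_eq_of_hasDerivAt (hγ'.differentiableOn one_ne_zero)
    (F := fun t => derivWithin γ (Icc a b) a + (t - a) • c + ((t - a) ^ 2 / 2) • d)
    (fun s => ((((hsub s).smul_const c).const_add _).add
      (((hsub s).pow 2).div_const 2 |>.smul_const d)).congr_deriv (by norm_num))
    (fun s hs => h s (Ico_subset_Icc_self hs)) (by simp)
  exact eq_of_derivWithin_eq_of_hasDerivAt (hγ.differentiableOn two_ne_zero)
    (fun s => (((((hsub s).smul_const _).const_add _).add
      (((hsub s).pow 2).div_const 2 |>.smul_const c)).add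
      (((hsub s).pow 3).div_const 6 |>.smul_const d)).congr_deriv (by norm_num; module))
    (fun s hs => h' s (Ico_subset_Icc_self hs)) (by simp)

end NormedSpace

section InnerProductSpace

variable [InnerProductSpace ℝ E]

theorem integral_derivWithin_inner_eq_sub {f g : ℝ → E} (hab : a < b)
    (hf : ContDiffOn ℝ 1 f (Icc a b)) (hg : ContDiffOn ℝ 1 g (Icc a b)) :
    ∫ s in a..b, ⟪derivWithin f (Icc a b) s, g s⟫_ℝ =
      ⟪f b, g b⟫_ℝ - ⟪f a, g a⟫_ℝ - ∫ s in a..b, ⟪f s, derivWithin g (Icc a b) s⟫_ℝ := by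
  have hU := uniqueDiffOn_Icc hab
  have hf' := (hf.continuousOn_derivWithin hU le_rfl).inner (𝕜 := ℝ) hg.continuousOn
  have hg' := hf.continuousOn.inner (𝕜 := ℝ) (hg.continuousOn_derivWithin hU le_rfl)
  rw [eq_sub_iff_add_eq, ← intervalIntegral.integral_add (hf'.intervalIntegrable_of_Icc hab.le)
    (hg'.intervalIntegrable_of_Icc hab.le),
    ← intervalIntegral.integral_derivWithin_Icc_of_contDiffOn_Icc (hf.inner ℝ hg) hab.le]
  refine intervalIntegral.integral_congr fun s hs => ?_
  rw [uIcc_of_le hab.le] at hs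
  rw [add_comm, ((hf.differentiableOn one_ne_zero s hs).hasDerivWithinAt.inner ℝ
    (hg.differentiableOn one_ne_zero s hs).hasDerivWithinAt).derivWithin (hU s hs)]

theorem integral_inner_derivWithin_derivWithin_affine {γ : ℝ → E}
    (hγ : ContDiffOn ℝ 2 γ (Icc 0 1)) (c d : E) :
    ∫ s in (0:ℝ)..1, ⟪derivWithin (derivWithin γ (Icc 0 1)) (Icc 0 1) s, c + s • d⟫_ℝ =
      ⟪derivWithin γ (Icc 0 1) 1 - derivWithin γ (Icc 0 1) 0, c + d⟫_ℝ
        - ⟪γ 1 - γ 0 - derivWithin γ (Icc 0 1) 0, d⟫_ℝ := by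
  have hU := uniqueDiffOn_Icc (zero_lt_one' ℝ)
  have hγ' : ContDiffOn ℝ 1 (derivWithin γ (Icc 0 1)) (Icc 0 1) :=
    hγ.derivWithin hU (by norm_num)
  have hq : ContDiffOn ℝ 1 (fun s : ℝ => c + s • d) (Icc 0 1) := by fun_prop
  have hq' : ∀ s ∈ uIcc (0:ℝ) 1, derivWithin (fun s : ℝ => c + s • d) (Icc 0 1) s = d := by
    intro s hs
    rw [uIcc_of_le zero_le_one] at hs
    simpa using
      (((hasDerivAt_id s).smul_const d).const_add c).hasDerivWithinAt.derivWithin (hU s hs)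
  rw [integral_derivWithin_inner_eq_sub zero_lt_one hγ' hq, intervalIntegral.integral_congr
    (fun s hs => congrArg _ (hq' s hs)), integral_derivWithin_inner_eq_sub zero_lt_one
    (hγ.of_le (by norm_num)) (contDiffOn_const (c := d))]
  simp only [derivWithin_fun_const, Pi.zero_apply, inner_zero_right, intervalIntegral.integral_zero,
    inner_sub_left, inner_add_right, zero_smul, one_smul, add_zero]
  ring

theorem integral_norm_sub_sq {f g : ℝ → E} (hab : a ≤ b) (hf : ContinuousOn f (Icc a b))
    (hg : ContinuousOn g (Icc a b)) :
    ∫ s in a..b, ‖f s - g s‖ ^ 2 =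
      (∫ s in a..b, ‖f s‖ ^ 2) - 2 * (∫ s in a..b, ⟪f s, g s⟫_ℝ) + ∫ s in a..b, ‖g s‖ ^ 2 := by
  have hff : IntervalIntegrable (fun s => ‖f s‖ ^ 2) volume a b :=
    (hf.norm.pow 2).intervalIntegrable_of_Icc hab
  have hfg : IntervalIntegrable (fun s => 2 * ⟪f s, g s⟫_ℝ) volume a b :=
    ((hf.inner (𝕜 := ℝ) hg).intervalIntegrable_of_Icc hab).const_mul 2
  have hgg : IntervalIntegrable (fun s => ‖g s‖ ^ 2) volume a b :=
    (hg.norm.pow 2).intervalIntegrable_of_Icc hab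
  simp_rw [norm_sub_sq_real]
  rw [intervalIntegral.integral_add (hff.sub hfg) hgg, intervalIntegral.integral_sub hff hfg,
    intervalIntegral.integral_const_mul]

theorem integral_norm_sq_affine (c d : E) :
    ∫ s in (0:ℝ)..1, ‖c + s • d‖ ^ 2 = ‖c‖ ^ 2 + ⟪c, d⟫_ℝ + ‖d‖ ^ 2 / 3 := by
  have hquad (s : ℝ) : ‖c + s • d‖ ^ 2 = ‖c‖ ^ 2 + 2 * ⟪c, d⟫_ℝ * s + ‖d‖ ^ 2 * s ^ 2 := by
    rw [norm_add_sq_real, inner_smul_right, norm_smul, mul_pow, Real.norm_eq_abs, sq_abs]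
    ring
  simp_rw [hquad]
  rw [intervalIntegral.integral_add, intervalIntegral.integral_add]
  · rw [intervalIntegral.integral_const, intervalIntegral.integral_const_mul,
      intervalIntegral.integral_const_mul, integral_id, integral_pow]
    ring
  all_goals exact Continuous.intervalIntegrable (by fun_prop) _ _

end InnerProductSpace

end

theorem acceleration_energy_minimizer_unique_general (n : ℕ)
    (x₀ v₀ x₁ v₁ : EuclideanSpace ℝ (Fin n))
    (γ : ℝ → EuclideanSpace ℝ (Fin n))
    (hγ : ContDiffOn ℝ 2 γ (Icc (0:ℝ) 1))
    (h0 : γ 0 = x₀) (h0' : derivWithin γ (Icc (0:ℝ) 1) 0 = v₀)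
    (h1 : γ 1 = x₁) (h1' : derivWithin γ (Icc (0:ℝ) 1) 1 = v₁)
    (hmin : (∫ t in (0:ℝ)..1,
        ‖derivWithin (derivWithin γ (Icc (0:ℝ) 1)) (Icc (0:ℝ) 1) t‖^2)
      = 12 * ‖x₁ - x₀ - v₀‖^2 - 12 * ⟪x₁ - x₀ - v₀, v₁ - v₀⟫_ℝ + 4 * ‖v₁ - v₀‖^2) :
    ∀ t ∈ Icc (0:ℝ) 1,
      γ t = x₀ + t • v₀
        + (t^2) • ((3:ℝ) • (x₁ - x₀) - (2:ℝ) • v₀ - v₁)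
        + (t^3) • (v₀ + v₁ - (2:ℝ) • (x₁ - x₀)) := by
  set w := x₁ - x₀ - v₀ with hw
  set u := v₁ - v₀ with hu
  set c := (6:ℝ) • w - (2:ℝ) • u
  set d := (6:ℝ) • u - (12:ℝ) • w
  set γ'' := derivWithin (derivWithin γ (Icc (0:ℝ) 1)) (Icc (0:ℝ) 1)
  have hU := uniqueDiffOn_Icc (zero_lt_one' ℝ)
  have hγ'' : ContinuousOn γ'' (Icc 0 1) :=
    (hγ.derivWithin hU (by norm_num)).continuousOn_derivWithin hU le_rfl
  have hq : ∫ s in (0:ℝ)..1, ‖c + s • d‖ ^ 2 = 12 * ‖w‖ ^ 2 - 12 * ⟪w, u⟫_ℝ + 4 * ‖u‖ ^ 2 := by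
    rw [integral_norm_sq_affine]
    simp only [← real_inner_self_eq_norm_sq, c, d, inner_sub_left, inner_sub_right,
      real_inner_smul_left, real_inner_smul_right, real_inner_comm w u]
    ring
  have hcross : ∫ s in (0:ℝ)..1, ⟪γ'' s, c + s • d⟫_ℝ
      = 12 * ‖w‖ ^ 2 - 12 * ⟪w, u⟫_ℝ + 4 * ‖u‖ ^ 2 := by
    rw [integral_inner_derivWithin_derivWithin_affine hγ, h0, h1, h0', h1', ← hw, ← hu]
    simp only [← real_inner_self_eq_norm_sq, c, d, inner_sub_right, inner_add_right,
      real_inner_smul_right, real_inner_comm w u]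
    ring
  have hzero : ∫ s in (0:ℝ)..1, ‖γ'' s - (c + s • d)‖ ^ 2 = 0 := by
    rw [integral_norm_sub_sq zero_le_one hγ'' (by fun_prop), hmin, hcross, hq]
    ring
  have h'' (s : ℝ) (hs : s ∈ Icc (0:ℝ) 1) : γ'' s = c + (s - 0) • d := by
    rw [sub_zero]
    exact sub_eq_zero.1
      (eq_zero_of_integral_norm_sq_eq_zero zero_lt_one (hγ''.sub (by fun_prop)) hzero s hs)
  intro t ht
  rw [eq_cubic_of_derivWithin_derivWithin_eq_affine zero_lt_one hγ h'' t ht, h0, h0', sub_zero]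
  module

/-- Uniqueness of the minimizer of the acceleration energy: if a `C²` curve `γ : [0,1] → ℝⁿ`
satisfies the Hermite boundary conditions and attains the minimal acceleration energy
`12‖x₁ − x₀ − v₀‖² − 12⟨x₁ − x₀ − v₀, v₁ − v₀⟩ + 4‖v₁ − v₀‖²`, then `γ` equals the cubic
Hermite polynomial `p(t) = x₀ + t v₀ + t²(3(x₁ − x₀) − 2v₀ − v₁) + t³(v₀ + v₁ − 2(x₁ − x₀))`
on `[0,1]`. -/
theorem acceleration_energy_minimizer_unique (n : ℕ) (hn : 1 ≤ n)
    (x₀ v₀ x₁ v₁ : EuclideanSpace ℝ (Fin n))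
    (γ : ℝ → EuclideanSpace ℝ (Fin n))
    (hγ : ContDiffOn ℝ 2 γ (Icc (0:ℝ) 1))
    (h0 : γ 0 = x₀) (h0' : derivWithin γ (Icc (0:ℝ) 1) 0 = v₀)
    (h1 : γ 1 = x₁) (h1' : derivWithin γ (Icc (0:ℝ) 1) 1 = v₁)
    (hmin : (∫ t in (0:ℝ)..1,
        ‖derivWithin (derivWithin γ (Icc (0:ℝ) 1)) (Icc (0:ℝ) 1) t‖^2)
      = 12 * ‖x₁ - x₀ - v₀‖^2 - 12 * ⟪x₁ - x₀ - v₀, v₁ - v₀⟫_ℝ + 4 * ‖v₁ - v₀‖^2) :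
    ∀ t ∈ Icc (0:ℝ) 1,
      γ t = x₀ + t • v₀
        + (t^2) • ((3:ℝ) • (x₁ - x₀) - (2:ℝ) • v₀ - v₁)
        + (t^3) • (v₀ + v₁ - (2:ℝ) • (x₁ - x₀)) :=
  acceleration_energy_minimizer_unique_general n x₀ v₀ x₁ v₁ γ hγ h0 h0' h1 h1' hmin
end

section
/- Let X and V be nonempty finite types and let Z := X × V be the discrete phase space. Let π̄ : Z × Z → ℝ be an everywhere positive probability density and ρ₀ : X → ℝ a probability density (ρ₀ ≥ 0, Σₓ ρ₀(x) = 1). Call a probability density π : Z × Z → ℝ feasible if Σ_{v ∈ V} Σ_{z' ∈ Z} π((x,v), z') = ρ₀(x) for every x ∈ X. Define π* ((x,v), z') := ρ₀(x) · π̄((x,v), z') / (Σ_{v' ∈ V} Σ_{z'' ∈ Z} π̄((x,v'), z'')). Then π* is feasible, and for every feasible π one has KL(π ‖ π̄) ≥ KL(π* ‖ π̄), with equality if and only if π = π*; i.e., π* is the unique KL-projection of π̄ onto the constraint that the position marginal at the first time point equals ρ₀. -/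
/-- A probability density on a finite type. -/
def IsProbDensity {S : Type*} [Fintype S] (α : S → ℝ) : Prop :=
  (∀ s, 0 ≤ α s) ∧ (∑ s, α s) = 1

/-- Relative entropy of densities on a finite type (with the convention `0 log 0 = 0`,
which holds automatically since `Real.log 0 = 0`). -/
noncomputable def KL {S : Type*} [Fintype S] (α β : S → ℝ) : ℝ :=
  ∑ s, α s * Real.log (α s / β s)

/-! For feasible `π` the log-ratio splits as `log (π / π̄) = log (π / π*) + log (π* / π̄)`, and
`π* / π̄` depends only on the position `x`. Since `π` and `π*` have the same position marginal
`ρ₀`, the second term has the same average under `π` as under `π*`, which gives the Pythagorean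
identity `KL(π ‖ π̄) = KL(π ‖ π*) + KL(π* ‖ π̄)`. Gibbs' inequality `KL(π ‖ π*) ≥ 0`, with equality
only at `π = π*`, concludes. Only the map `p ↦ p.1.1` to positions matters, so all of this
works for the marginal along any surjection `f`. -/

open Finset InformationTheory

section Gibbs

variable {S : Type*} [Fintype S]

lemma mul_log_div_eq_mul_klFun_add_sub {a b : ℝ} (hab : b = 0 → a = 0) :
    a * Real.log (a / b) = b * klFun (a / b) + a - b := by
  rcases eq_or_ne b 0 with rfl | hb
  · simp [hab rfl]
  · rw [klFun_apply]
    field_simp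
    ring

lemma KL_eq_sum_mul_klFun {α β : S → ℝ} (hα : ∑ s, α s = 1) (hβ : ∑ s, β s = 1)
    (habs : ∀ s, β s = 0 → α s = 0) : KL α β = ∑ s, β s * klFun (α s / β s) := by
  simp_rw [KL, mul_log_div_eq_mul_klFun_add_sub (habs _), sum_sub_distrib, sum_add_distrib,
    hα, hβ, add_sub_cancel_right]

theorem KL_nonneg {α β : S → ℝ} (hα : IsProbDensity α) (hβ : IsProbDensity β)
    (habs : ∀ s, β s = 0 → α s = 0) : 0 ≤ KL α β := by
  rw [KL_eq_sum_mul_klFun hα.2 hβ.2 habs]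
  exact sum_nonneg fun s _ => mul_nonneg (hβ.1 s) (klFun_nonneg (div_nonneg (hα.1 s) (hβ.1 s)))

theorem KL_eq_zero_iff {α β : S → ℝ} (hα : IsProbDensity α) (hβ : IsProbDensity β)
    (habs : ∀ s, β s = 0 → α s = 0) : KL α β = 0 ↔ α = β := by
  rw [KL_eq_sum_mul_klFun hα.2 hβ.2 habs, sum_eq_zero_iff_of_nonneg fun s _ =>
    mul_nonneg (hβ.1 s) (klFun_nonneg (div_nonneg (hα.1 s) (hβ.1 s)))]
  refine ⟨fun h => funext fun s => ?_, ?_⟩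
  · rcases (hβ.1 s).eq_or_lt with hs | hs
    · rw [← hs, habs s hs.symm]
    · have := h s (mem_univ s)
      rwa [mul_eq_zero, or_iff_right hs.ne', klFun_eq_zero_iff (div_nonneg (hα.1 s) hs.le),
        div_eq_one_iff_eq hs.ne'] at this
  · rintro rfl s -
    rcases eq_or_ne (α s) 0 with hs | hs
    · simp [hs]
    · simp [div_self hs, klFun_one]

@[simp]
theorem KL_self (α : S → ℝ) : KL α α = 0 := by
  refine sum_eq_zero fun s _ => ?_
  rcases eq_or_ne (α s) 0 with hs | hs
  · simp [hs]
  · simp [div_self hs]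

end Gibbs

section Marginal

variable {S T : Type*} [Fintype S] [DecidableEq T]

def marginal (f : S → T) (α : S → ℝ) (t : T) : ℝ :=
  ∑ s with f s = t, α s

/-- Conditioning `β` on the value of `f` and replacing the law of `f` by `ρ`. -/
noncomputable def marginalProjection (f : S → T) (β : S → ℝ) (ρ : T → ℝ) (s : S) : ℝ :=
  ρ (f s) * β s / marginal f β (f s)

variable {f : S → T} {α β π : S → ℝ} {ρ : T → ℝ}

theorem le_marginal (hα : ∀ s, 0 ≤ α s) (s : S) : α s ≤ marginal f α (f s) :=
  single_le_sum (fun s' _ => hα s') (by simp)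

theorem marginal_pos (hβ : ∀ s, 0 < β s) (s : S) : 0 < marginal f β (f s) :=
  (hβ s).trans_le (le_marginal (fun s' => (hβ s').le) s)

theorem marginal_marginalProjection (hf : f.Surjective) (hβ : ∀ s, 0 < β s) :
    marginal f (marginalProjection f β ρ) = ρ := by
  funext t
  obtain ⟨s, rfl⟩ := hf t
  have hfiber : ∀ s' ∈ ({s' | f s' = f s} : Finset S),
      marginalProjection f β ρ s' = ρ (f s) / marginal f β (f s) * β s' := by
    intro s' hs'
    rw [marginalProjection, (mem_filter.1 hs').2]
    ring
  rw [marginal, sum_congr rfl hfiber, ← mul_sum, ← marginal,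
    div_mul_cancel₀ _ (marginal_pos hβ s).ne']

theorem marginalProjection_pos (hβ : ∀ s, 0 < β s) (hπ : ∀ s, 0 ≤ π s)
    (hmarg : marginal f π = ρ) {s : S} (hs : 0 < π s) : 0 < marginalProjection f β ρ s := by
  have hρ : 0 < ρ (f s) := hmarg ▸ hs.trans_le (le_marginal hπ s)
  exact div_pos (mul_pos hρ (hβ s)) (marginal_pos hβ s)

theorem eq_zero_of_marginalProjection_eq_zero (hβ : ∀ s, 0 < β s) (hπ : ∀ s, 0 ≤ π s)
    (hmarg : marginal f π = ρ) {s : S} (hs : marginalProjection f β ρ s = 0) : π s = 0 :=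
  by_contra fun h => (marginalProjection_pos hβ hπ hmarg ((hπ s).lt_of_ne' h)).ne' hs

theorem marginalProjection_nonneg (hβ : ∀ s, 0 < β s) (hρ : ∀ t, 0 ≤ ρ t) (s : S) :
    0 ≤ marginalProjection f β ρ s :=
  div_nonneg (mul_nonneg (hρ _) (hβ s).le) (marginal_pos hβ s).le

variable [Fintype T]

theorem sum_marginal (f : S → T) (α : S → ℝ) : ∑ t, marginal f α t = ∑ s, α s :=
  sum_fiberwise univ f α

theorem sum_mul_comp_eq_sum_marginal_mul (f : S → T) (α : S → ℝ) (g : T → ℝ) :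
    ∑ s, α s * g (f s) = ∑ t, marginal f α t * g t := by
  rw [← sum_fiberwise univ f]
  refine sum_congr rfl fun t _ => ?_
  rw [marginal, sum_mul]
  exact sum_congr rfl fun s hs => by rw [(mem_filter.1 hs).2]

theorem isProbDensity_marginalProjection (hf : f.Surjective) (hβ : ∀ s, 0 < β s)
    (hρ : IsProbDensity ρ) : IsProbDensity (marginalProjection f β ρ) :=
  ⟨marginalProjection_nonneg hβ hρ.1, by
    rw [← sum_marginal f, marginal_marginalProjection hf hβ, hρ.2]⟩

theorem KL_eq_KL_marginalProjection_add (hβ : ∀ s, 0 < β s) (hπ : ∀ s, 0 ≤ π s)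
    (hmarg : marginal f π = ρ) :
    KL π β = KL π (marginalProjection f β ρ) + KL ρ (marginal f β) := by
  have hterm : ∀ s, π s * Real.log (π s / β s) =
      π s * Real.log (π s / marginalProjection f β ρ s) +
        π s * Real.log (ρ (f s) / marginal f β (f s)) := by
    intro s
    rcases (hπ s).eq_or_lt with hs | hs
    · simp [← hs]
    have hρ : 0 < ρ (f s) := hmarg ▸ hs.trans_le (le_marginal hπ s)
    have hstar := marginalProjection_pos hβ hπ hmarg hs
    rw [← mul_add, ← Real.log_mul (div_pos hs hstar).ne' (div_pos hρ (marginal_pos hβ s)).ne',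
      marginalProjection]
    have hβs := (hβ s).ne'
    have hβf := (marginal_pos (f := f) hβ s).ne'
    field_simp
  rw [KL, KL, KL, sum_congr rfl fun s _ => hterm s, sum_add_distrib,
    sum_mul_comp_eq_sum_marginal_mul f π fun t => Real.log (ρ t / marginal f β t), hmarg]

theorem KL_marginalProjection (hf : f.Surjective) (hβ : ∀ s, 0 < β s) (hρ : ∀ t, 0 ≤ ρ t) :
    KL (marginalProjection f β ρ) β = KL ρ (marginal f β) := by
  rw [KL_eq_KL_marginalProjection_add hβ (marginalProjection_nonneg hβ hρ)
    (marginal_marginalProjection hf hβ), KL_self, zero_add]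

theorem KL_eq_KL_marginalProjection_add_KL (hf : f.Surjective) (hβ : ∀ s, 0 < β s)
    (hρ : ∀ t, 0 ≤ ρ t) (hπ : ∀ s, 0 ≤ π s) (hmarg : marginal f π = ρ) :
    KL π β = KL π (marginalProjection f β ρ) + KL (marginalProjection f β ρ) β := by
  rw [KL_marginalProjection hf hβ hρ, KL_eq_KL_marginalProjection_add hβ hπ hmarg]

theorem KL_marginalProjection_le (hf : f.Surjective) (hβ : ∀ s, 0 < β s)
    (hρ : IsProbDensity ρ) (hπ : IsProbDensity π) (hmarg : marginal f π = ρ) :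
    KL (marginalProjection f β ρ) β ≤ KL π β := by
  rw [KL_eq_KL_marginalProjection_add_KL hf hβ hρ.1 hπ.1 hmarg, le_add_iff_nonneg_left]
  exact KL_nonneg hπ (isProbDensity_marginalProjection hf hβ hρ) fun _ =>
    eq_zero_of_marginalProjection_eq_zero hβ hπ.1 hmarg

theorem KL_eq_KL_marginalProjection_iff (hf : f.Surjective) (hβ : ∀ s, 0 < β s)
    (hρ : IsProbDensity ρ) (hπ : IsProbDensity π) (hmarg : marginal f π = ρ) :
    KL π β = KL (marginalProjection f β ρ) β ↔ π = marginalProjection f β ρ := by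
  rw [KL_eq_KL_marginalProjection_add_KL hf hβ hρ.1 hπ.1 hmarg, add_eq_right]
  exact KL_eq_zero_iff hπ (isProbDensity_marginalProjection hf hβ hρ) fun _ =>
    eq_zero_of_marginalProjection_eq_zero hβ hπ.1 hmarg

end Marginal

theorem marginal_fst_fst {A B C : Type*} [Fintype A] [Fintype B] [Fintype C] [DecidableEq A]
    (α : (A × B) × C → ℝ) (a : A) :
    marginal (fun p => p.1.1) α a = ∑ b, ∑ c, α ((a, b), c) := by
  simp only [marginal, sum_filter, Fintype.sum_prod_type]
  rw [Fintype.sum_eq_single a fun x hx => by simp [hx]]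
  simp

theorem kl_projection_first_position_marginal_general
    (X V : Type*) [Fintype X] [Fintype V] [Nonempty V]
    (pibar : (X × V) × (X × V) → ℝ)
    (hpos : ∀ p, 0 < pibar p)
    (ρ₀ : X → ℝ) (hρ₀ : IsProbDensity ρ₀)
    (pistar : (X × V) × (X × V) → ℝ)
    (hpistar : pistar = fun p =>
      ρ₀ p.1.1 * pibar p / (∑ v' : V, ∑ z'' : X × V, pibar ((p.1.1, v'), z''))) :
    (IsProbDensity pistar ∧
      ∀ x : X, (∑ v : V, ∑ z' : X × V, pistar ((x, v), z')) = ρ₀ x) ∧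
    ∀ π : (X × V) × (X × V) → ℝ,
      IsProbDensity π →
      (∀ x : X, (∑ v : V, ∑ z' : X × V, π ((x, v), z')) = ρ₀ x) →
      (KL pistar pibar ≤ KL π pibar ∧ (KL π pibar = KL pistar pibar ↔ π = pistar)) := by
  classical
  let f : (X × V) × (X × V) → X := fun p => p.1.1
  have hf : f.Surjective := fun x =>
    ⟨((x, Classical.arbitrary V), (x, Classical.arbitrary V)), rfl⟩
  have hfeasible : ∀ α x, marginal f α x = ∑ v : V, ∑ z' : X × V, α ((x, v), z') :=
    marginal_fst_fst
  obtain rfl : pistar = marginalProjection f pibar ρ₀ := by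
    rw [hpistar]
    funext p
    rw [marginalProjection, hfeasible]
  refine ⟨⟨isProbDensity_marginalProjection hf hpos hρ₀, fun x => ?_⟩, fun π hπ hπρ₀ => ?_⟩
  · rw [← hfeasible, marginal_marginalProjection hf hpos]
  · have hmarg : marginal f π = ρ₀ := funext fun x => (hfeasible π x).trans (hπρ₀ x)
    exact ⟨KL_marginalProjection_le hf hpos hρ₀ hπ hmarg,
      KL_eq_KL_marginalProjection_iff hf hpos hρ₀ hπ hmarg⟩

/-- The explicit update `π*((x,v),z') = ρ₀(x) π̄((x,v),z') / Σ_{v',z''} π̄((x,v'),z'')` is the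
unique KL-projection of an everywhere positive prior `π̄` onto the set of couplings whose
position marginal at the first time point equals `ρ₀`. -/
theorem kl_projection_first_position_marginal
    (X V : Type*) [Fintype X] [Fintype V] [Nonempty X] [Nonempty V]
    (pibar : (X × V) × (X × V) → ℝ)
    (hpibar : IsProbDensity pibar) (hpos : ∀ p, 0 < pibar p)
    (ρ₀ : X → ℝ) (hρ₀ : IsProbDensity ρ₀)
    (pistar : (X × V) × (X × V) → ℝ)
    (hpistar : pistar = fun p =>
      ρ₀ p.1.1 * pibar p / (∑ v' : V, ∑ z'' : X × V, pibar ((p.1.1, v'), z''))) :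
    (IsProbDensity pistar ∧
      ∀ x : X, (∑ v : V, ∑ z' : X × V, pistar ((x, v), z')) = ρ₀ x) ∧
    ∀ π : (X × V) × (X × V) → ℝ,
      IsProbDensity π →
      (∀ x : X, (∑ v : V, ∑ z' : X × V, π ((x, v), z')) = ρ₀ x) →
      (KL pistar pibar ≤ KL π pibar ∧ (KL π pibar = KL pistar pibar ↔ π = pistar)) :=
  kl_projection_first_position_marginal_general X V pibar hpos ρ₀ hρ₀ pistar hpistar
end

section
/- Let X and V be nonempty finite types, Z := X × V, let N ≥ 1, let β₀, …, β_{N−1} : Z × Z → ℝ be everywhere positive functions, and let ρ₀, …, ρ_N : X → ℝ be probability densities. Call a tuple (π₀, …, π_{N−1}) of probability densities on Z × Z feasible if: (a) the second marginal of π_i equals the first marginal of π_{i+1}, i.e. Σ_{z'} π_i(z', z) = Σ_{z'} π_{i+1}(z, z') for all z ∈ Z, for i = 0, …, N−2; (b) Σ_{v ∈ V} Σ_{z' ∈ Z} π_i((x,v), z') = ρ_i(x) for all x ∈ X and i = 0, …, N−1; and (c) Σ_{v ∈ V} Σ_{z' ∈ Z} π_{N−1}(z', (x,v)) = ρ_N(x)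 for all x ∈ X. Then the feasible set is a nonempty compact convex subset of (ℝ^{Z×Z})^N, the objective J(π₀, …, π_{N−1}) := Σ_{i=0}^{N−1} KL(π_i ‖ β_i) is strictly convex on it, and J attains its minimum over the feasible set at a unique point. -/
/-- Generalized relative entropy `KL(α‖β) = Σ_s [α(s) log(α(s)/β(s)) − α(s) + β(s)]`
(with the convention `0 log 0 = 0`, automatic since `Real.log 0 = 0`). -/
noncomputable def KLgen {S : Type*} [Fintype S] (α β : S → ℝ) : ℝ :=
  ∑ s, (α s * Real.log (α s / β s) - α s + β s)

lemma klterm_eq (b : ℝ) (hb : b ≠ 0) (t : ℝ) :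
    t * Real.log (t / b) = t * Real.log t - t * Real.log b := by
  rcases eq_or_ne t 0 with rfl | ht
  · simp
  · rw [Real.log_div ht hb]; ring

lemma affine_convexOn (c d : ℝ) : ConvexOn ℝ (Set.Ici (0:ℝ)) (fun t => c * t + d) := by
  refine ⟨convex_Ici 0, fun x _ y _ a b ha hb hab => le_of_eq ?_⟩
  simp only [smul_eq_mul]
  linear_combination (-d) * hab

lemma klterm_strictConvexOn (b : ℝ) (hb : 0 < b) :
    StrictConvexOn ℝ (Set.Ici (0:ℝ)) (fun t => t * Real.log (t / b) - t + b) := by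
  have h1 : StrictConvexOn ℝ (Set.Ici (0:ℝ))
      (fun t => t * Real.log t + ((-(Real.log b) - 1) * t + b)) :=
    Real.strictConvexOn_mul_log.add_convexOn (affine_convexOn _ _)
  have heq : (fun t => t * Real.log t + ((-(Real.log b) - 1) * t + b))
      = fun t => t * Real.log (t / b) - t + b := by
    funext t
    rw [klterm_eq b hb.ne' t]; ring
  rwa [heq] at h1

lemma KLgen_comb_le {S : Type*} [Fintype S] (f f' b : S → ℝ)
    (hf : ∀ s, 0 ≤ f s) (hf' : ∀ s, 0 ≤ f' s) (hb : ∀ s, 0 < b s)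
    {a c : ℝ} (ha : 0 < a) (hc : 0 < c) (hac : a + c = 1) :
    KLgen (fun s => a * f s + c * f' s) b ≤ a * KLgen f b + c * KLgen f' b := by
  unfold KLgen
  rw [Finset.mul_sum, Finset.mul_sum, ← Finset.sum_add_distrib]
  refine Finset.sum_le_sum fun s _ => ?_
  have := (klterm_strictConvexOn (b s) (hb s)).convexOn.2
    (Set.mem_Ici.mpr (hf s)) (Set.mem_Ici.mpr (hf' s)) ha.le hc.le hac
  simpa [smul_eq_mul, mul_sub, mul_add] using this

lemma KLgen_comb_lt {S : Type*} [Fintype S] (f f' b : S → ℝ)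
    (hf : ∀ s, 0 ≤ f s) (hf' : ∀ s, 0 ≤ f' s) (hb : ∀ s, 0 < b s) (hne : f ≠ f')
    {a c : ℝ} (ha : 0 < a) (hc : 0 < c) (hac : a + c = 1) :
    KLgen (fun s => a * f s + c * f' s) b < a * KLgen f b + c * KLgen f' b := by
  unfold KLgen
  rw [Finset.mul_sum, Finset.mul_sum, ← Finset.sum_add_distrib]
  obtain ⟨s₀, hs₀⟩ := Function.ne_iff.mp hne
  refine Finset.sum_lt_sum (fun s _ => ?_) ⟨s₀, Finset.mem_univ _, ?_⟩
  · have := (klterm_strictConvexOn (b s) (hb s)).convexOn.2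
      (Set.mem_Ici.mpr (hf s)) (Set.mem_Ici.mpr (hf' s)) ha.le hc.le hac
    simpa [smul_eq_mul, mul_sub, mul_add] using this
  · have := (klterm_strictConvexOn (b s₀) (hb s₀)).2
      (Set.mem_Ici.mpr (hf s₀)) (Set.mem_Ici.mpr (hf' s₀)) hs₀ ha hc hac
    simpa [smul_eq_mul, mul_sub, mul_add] using this

/-- The static discrete multi-marginal Schrödinger bridge problem: the feasible set of tuples
of couplings with matching consecutive phase-space marginals and prescribed position marginals
is nonempty, compact and convex, the entropic objective `J = Σᵢ KL(πᵢ‖βᵢ)` is strictly convex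
on it, and `J` attains its minimum over it at a unique point. -/
theorem multimarginal_SB_exists_unique
    (X V : Type*) [Fintype X] [Fintype V] [Nonempty X] [Nonempty V]
    (N : ℕ) (hN : 1 ≤ N)
    (β : Fin N → ((X × V) × (X × V)) → ℝ) (hβ : ∀ i p, 0 < β i p)
    (ρ : Fin (N + 1) → X → ℝ) (hρ : ∀ i, IsProbDensity (ρ i))
    (F : Set (Fin N → ((X × V) × (X × V)) → ℝ))
    (hF : F = {π | (∀ i, IsProbDensity (π i)) ∧
      (∀ i j : Fin N, (j : ℕ) = (i : ℕ) + 1 →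
        ∀ z : X × V, (∑ z' : X × V, π i (z', z)) = ∑ z' : X × V, π j (z, z')) ∧
      (∀ i : Fin N, ∀ x : X,
        (∑ v : V, ∑ z' : X × V, π i ((x, v), z')) = ρ i.castSucc x) ∧
      (∀ i : Fin N, (i : ℕ) = N - 1 → ∀ x : X,
        (∑ v : V, ∑ z' : X × V, π i (z', (x, v))) = ρ (Fin.last N) x)})
    (J : (Fin N → ((X × V) × (X × V)) → ℝ) → ℝ)
    (hJ : J = fun π => ∑ i, KLgen (π i) (β i)) :
    F.Nonempty ∧ IsCompact F ∧ Convex ℝ F ∧ StrictConvexOn ℝ F J ∧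
    ∃! π, π ∈ F ∧ ∀ π' ∈ F, J π ≤ J π' := by
  subst hJ
  have hcV : True := trivial
  set cV : ℝ := (Fintype.card V : ℝ) with hcVdef
  have hcVpos : 0 < cV := by
    simp only [hcVdef, Nat.cast_pos]
    exact Fintype.card_pos
  -- helper sums
  have hsum : ∀ j : Fin (N + 1), (∑ z : X × V, ρ j z.1) = cV := by
    intro j
    rw [Fintype.sum_prod_type]
    simp [Finset.sum_const, Finset.card_univ, nsmul_eq_mul, ← Finset.sum_mul, (hρ j).2, hcVdef,
      mul_comm]
  -- the explicit feasible point
  set π0 : Fin N → ((X × V) × (X × V)) → ℝ :=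
    fun i p => ρ i.castSucc p.1.1 * ρ i.succ p.2.1 / (cV * cV) with hπ0
  have hπ0mem : π0 ∈ {π : Fin N → ((X × V) × (X × V)) → ℝ | (∀ i, IsProbDensity (π i)) ∧
      (∀ i j : Fin N, (j : ℕ) = (i : ℕ) + 1 →
        ∀ z : X × V, (∑ z' : X × V, π i (z', z)) = ∑ z' : X × V, π j (z, z')) ∧
      (∀ i : Fin N, ∀ x : X,
        (∑ v : V, ∑ z' : X × V, π i ((x, v), z')) = ρ i.castSucc x) ∧
      (∀ i : Fin N, (i : ℕ) = N - 1 → ∀ x : X,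
        (∑ v : V, ∑ z' : X × V, π i (z', (x, v))) = ρ (Fin.last N) x)} := by
    have hfirst : ∀ (i : Fin N) (z : X × V), (∑ z' : X × V, π0 i (z, z')) = ρ i.castSucc z.1 / cV := by
      intro i z
      simp only [hπ0]
      rw [← Finset.sum_div, ← Finset.mul_sum, hsum]
      field_simp
    have hsecond : ∀ (i : Fin N) (z : X × V), (∑ z' : X × V, π0 i (z', z)) = ρ i.succ z.1 / cV := by
      intro i z
      simp only [hπ0]
      rw [← Finset.sum_div, ← Finset.sum_mul, hsum]
      field_simp
    refine ⟨?_, ?_, ?_, ?_⟩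
    · intro i
      constructor
      · intro s
        exact div_nonneg (mul_nonneg ((hρ _).1 _) ((hρ _).1 _)) (by positivity)
      · rw [Fintype.sum_prod_type]
        have : ∀ z : X × V, (∑ z' : X × V, π0 i (z, z')) = ρ i.castSucc z.1 / cV := hfirst i
        rw [Finset.sum_congr rfl fun z _ => this z, ← Finset.sum_div, hsum]
        field_simp
    · intro i j hij z
      rw [hsecond i z, hfirst j z]
      congr 2
      apply Fin.ext
      simp [Fin.val_succ, hij]
    · intro i x
      have : ∀ v : V, (∑ z' : X × V, π0 i ((x, v), z')) = ρ i.castSucc x / cV := by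
        intro v; exact hfirst i (x, v)
      rw [Finset.sum_congr rfl fun v _ => this v]
      rw [Finset.sum_const, Finset.card_univ, nsmul_eq_mul]
      field_simp [hcVdef, mul_comm]
      rw [hcVdef]; ring
    · intro i hi x
      have : ∀ v : V, (∑ z' : X × V, π0 i (z', (x, v))) = ρ i.succ x / cV := by
        intro v; exact hsecond i (x, v)
      rw [Finset.sum_congr rfl fun v _ => this v]
      have hsucc : i.succ = Fin.last N := by
        apply Fin.ext
        simp [Fin.val_succ, hi, Fin.val_last]
        omega
      rw [hsucc, Finset.sum_const, Finset.card_univ, nsmul_eq_mul]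
      field_simp [hcVdef, mul_comm]
      rw [hcVdef]; ring
  have hmem : ∀ π : Fin N → ((X × V) × (X × V)) → ℝ, π ∈ F ↔
      ((∀ i, IsProbDensity (π i)) ∧
      (∀ i j : Fin N, (j : ℕ) = (i : ℕ) + 1 →
        ∀ z : X × V, (∑ z' : X × V, π i (z', z)) = ∑ z' : X × V, π j (z, z')) ∧
      (∀ i : Fin N, ∀ x : X,
        (∑ v : V, ∑ z' : X × V, π i ((x, v), z')) = ρ i.castSucc x) ∧
      (∀ i : Fin N, (i : ℕ) = N - 1 → ∀ x : X,
        (∑ v : V, ∑ z' : X × V, π i (z', (x, v))) = ρ (Fin.last N) x)) := by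
    intro π; rw [hF]; exact Iff.rfl
  have hFne : F.Nonempty := ⟨π0, (hmem π0).mpr hπ0mem⟩
  -- evaluation maps are continuous
  have ceval : ∀ (i : Fin N) (s : (X × V) × (X × V)),
      Continuous fun π : Fin N → ((X × V) × (X × V)) → ℝ => π i s :=
    fun i s => (continuous_apply s).comp (continuous_apply i)
  -- F is closed
  have hclosed : IsClosed F := by
    rw [hF]
    simp only [IsProbDensity, Set.setOf_and, Set.setOf_forall]
    refine IsClosed.inter ?_ (IsClosed.inter ?_ (IsClosed.inter ?_ ?_))
    · exact isClosed_iInter fun i => IsClosed.inter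
        (isClosed_iInter fun s => isClosed_le continuous_const (ceval i s))
        (isClosed_eq (continuous_finset_sum _ fun s _ => ceval i s) continuous_const)
    · exact isClosed_iInter fun i => isClosed_iInter fun j => isClosed_iInter fun hij =>
        isClosed_iInter fun z => isClosed_eq
          (continuous_finset_sum _ fun z' _ => ceval i (z', z))
          (continuous_finset_sum _ fun z' _ => ceval j (z, z'))
    · exact isClosed_iInter fun i => isClosed_iInter fun x => isClosed_eq
        (continuous_finset_sum _ fun v _ => continuous_finset_sum _ fun z' _ => ceval i ((x, v), z'))
        continuous_const
    · exact isClosed_iInter fun i => isClosed_iInter fun hi => isClosed_iInter fun x =>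
        isClosed_eq
          (continuous_finset_sum _ fun v _ => continuous_finset_sum _ fun z' _ => ceval i (z', (x, v)))
          continuous_const
  -- F is compact
  have hcompact : IsCompact F := by
    have hKc : IsCompact (Set.univ.pi fun _ : Fin N =>
        (Set.univ.pi fun _ : (X × V) × (X × V) => Set.Icc (0:ℝ) 1)) :=
      isCompact_univ_pi fun _ => isCompact_univ_pi fun _ => isCompact_Icc
    refine hKc.of_isClosed_subset hclosed ?_
    intro π hπ
    obtain ⟨hpd, -, -, -⟩ := (hmem π).mp hπ
    intro i _
    intro s _
    refine ⟨(hpd i).1 s, ?_⟩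
    calc π i s ≤ ∑ t, π i t := Finset.single_le_sum (fun t _ => (hpd i).1 t) (Finset.mem_univ s)
    _ = 1 := (hpd i).2
  -- F is convex
  have hconv : Convex ℝ F := by
    intro p hp q hq a b ha hb hab
    obtain ⟨hp1, hp2, hp3, hp4⟩ := (hmem p).mp hp
    obtain ⟨hq1, hq2, hq3, hq4⟩ := (hmem q).mp hq
    refine (hmem _).mpr ⟨?_, ?_, ?_, ?_⟩
    · intro i
      constructor
      · intro s
        simp only [Pi.add_apply, Pi.smul_apply, smul_eq_mul]
        exact add_nonneg (mul_nonneg ha ((hp1 i).1 s)) (mul_nonneg hb ((hq1 i).1 s))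
      · simp only [Pi.add_apply, Pi.smul_apply, smul_eq_mul]
        rw [Finset.sum_add_distrib, ← Finset.mul_sum, ← Finset.mul_sum, (hp1 i).2, (hq1 i).2]
        linarith
    · intro i j hij z
      simp only [Pi.add_apply, Pi.smul_apply, smul_eq_mul]
      rw [Finset.sum_add_distrib, ← Finset.mul_sum, ← Finset.mul_sum,
        Finset.sum_add_distrib, ← Finset.mul_sum, ← Finset.mul_sum,
        hp2 i j hij z, hq2 i j hij z]
    · intro i x
      simp only [Pi.add_apply, Pi.smul_apply, smul_eq_mul]
      have : ∀ v : V, (∑ z' : X × V, (a * p i ((x, v), z') + b * q i ((x, v), z')))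
          = a * (∑ z' : X × V, p i ((x, v), z')) + b * ∑ z' : X × V, q i ((x, v), z') := by
        intro v
        rw [Finset.sum_add_distrib, ← Finset.mul_sum, ← Finset.mul_sum]
      rw [Finset.sum_congr rfl fun v _ => this v, Finset.sum_add_distrib,
        ← Finset.mul_sum, ← Finset.mul_sum, hp3 i x, hq3 i x]
      linear_combination (ρ i.castSucc x) * hab
    · intro i hi x
      simp only [Pi.add_apply, Pi.smul_apply, smul_eq_mul]
      have : ∀ v : V, (∑ z' : X × V, (a * p i (z', (x, v)) + b * q i (z', (x, v))))
          = a * (∑ z' : X × V, p i (z', (x, v))) + b * ∑ z' : X × V, q i (z', (x, v)) := by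
        intro v
        rw [Finset.sum_add_distrib, ← Finset.mul_sum, ← Finset.mul_sum]
      rw [Finset.sum_congr rfl fun v _ => this v, Finset.sum_add_distrib,
        ← Finset.mul_sum, ← Finset.mul_sum, hp4 i hi x, hq4 i hi x]
      linear_combination (ρ (Fin.last N) x) * hab
  -- J is strictly convex on F
  have hstrict : StrictConvexOn ℝ F (fun π => ∑ i, KLgen (π i) (β i)) := by
    refine ⟨hconv, ?_⟩
    intro p hp q hq hpq a b ha hb hab
    obtain ⟨hp1, -, -, -⟩ := (hmem p).mp hp
    obtain ⟨hq1, -, -, -⟩ := (hmem q).mp hq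
    simp only [smul_eq_mul, Pi.add_apply, Pi.smul_apply]
    rw [Finset.mul_sum, Finset.mul_sum, ← Finset.sum_add_distrib]
    obtain ⟨i₀, hi₀⟩ := Function.ne_iff.mp hpq
    refine Finset.sum_lt_sum (fun i _ => ?_) ⟨i₀, Finset.mem_univ _, ?_⟩
    · have := KLgen_comb_le (p i) (q i) (β i) (hp1 i).1 (hq1 i).1 (hβ i) ha hb hab
      convert this using 2
      all_goals first | rfl | (ext s; simp)
    · have := KLgen_comb_lt (p i₀) (q i₀) (β i₀) (hp1 i₀).1 (hq1 i₀).1 (hβ i₀) hi₀ ha hb hab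
      convert this using 2
      all_goals first | rfl | (ext s; simp)
  -- J is continuous
  have hJcont : Continuous fun π : Fin N → ((X × V) × (X × V)) → ℝ => ∑ i, KLgen (π i) (β i) := by
    have hrw : (fun π : Fin N → ((X × V) × (X × V)) → ℝ => ∑ i, KLgen (π i) (β i))
        = fun π => ∑ i, ∑ s, (π i s * Real.log (π i s) - π i s * Real.log (β i s)
            - π i s + β i s) := by
      funext π
      refine Finset.sum_congr rfl fun i _ => ?_
      unfold KLgen
      refine Finset.sum_congr rfl fun s _ => ?_
      rw [klterm_eq (β i s) (hβ i s).ne']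
    rw [hrw]
    refine continuous_finset_sum _ fun i _ => continuous_finset_sum _ fun s _ => ?_
    exact (((Real.continuous_mul_log.comp (ceval i s)).sub
      ((ceval i s).mul continuous_const)).sub (ceval i s)).add continuous_const
  obtain ⟨πm, hπm, hπmmin⟩ := hcompact.exists_isMinOn hFne hJcont.continuousOn
  refine ⟨hFne, hcompact, hconv, hstrict, πm, ⟨hπm, fun π' hπ' => hπmmin hπ'⟩, ?_⟩
  intro y ⟨hy, hymin⟩
  exact hstrict.eq_of_isMinOn (isMinOn_iff.mpr hymin) (isMinOn_iff.mpr fun x hx => hπmmin hx)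
    hy hπm
end
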